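/- arXiv:2605.27782 — 2 statements merged into one kernel-verified Lean document; each statement's English description precedes it below -/
import Mathlib

section
/- Suppose f is μ-strongly convex with minimizer w*_f, g satisfies |f(w) - g(w)| ≤ α and ‖∇f(w) - ∇g(w)‖ ≤ ζ for all w, and points w̃, w_T satisfy g(w_T) ≤ g(w̃) and ‖∇g(w̃)‖ ≤ ρ. Then f(w_T) - f(w*_f) ≤ 2α + (ρ² + 2ζρ + ζ²)/(2μ). -/
/-!
Strong monotonicity of `∇f` gives, by integrating along the segment from `u` to `v`, the quadratic
lower bound `f v ≥ f u + ⟪∇f u, v - u⟫ + μ/2 ‖v - u‖²`; minimizing its right side over `v` yields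
the Polyak–Łojasiewicz inequality `f u - f v ≤ ‖∇f u‖² / (2μ)`, for every `v`. At `w̃` the gradient
bounds give `‖∇f w̃‖ ≤ ρ + ζ`, and `f w_T ≤ g w_T + α ≤ g w̃ + α ≤ f w̃ + 2α`.
-/

open scoped RealInnerProductSpace

lemma add_deriv_zero_add_half_le_of_sub_deriv_ge {φ φ' : ℝ → ℝ} {c : ℝ}
    (hφ : ∀ t ∈ Set.Icc (0 : ℝ) 1, HasDerivAt φ (φ' t) t)
    (hgrowth : ∀ t ∈ Set.Ioo (0 : ℝ) 1, c * t ≤ φ' t - φ' 0) :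
    φ 0 + φ' 0 + c / 2 ≤ φ 1 := by
  set ψ : ℝ → ℝ := fun t => φ t - t * φ' 0 - c / 2 * t ^ 2
  have hψ : ∀ t ∈ Set.Icc (0 : ℝ) 1, HasDerivAt ψ (φ' t - φ' 0 - c * t) t := fun t ht => by
    refine (((hφ t ht).sub ((hasDerivAt_id' t).mul_const (φ' 0))).sub
      ((hasDerivAt_pow 2 t).const_mul (c / 2))).congr_deriv ?_
    push_cast
    ring
  have hmono : MonotoneOn ψ (Set.Icc 0 1) := by
    refine monotoneOn_of_hasDerivWithinAt_nonneg (f' := fun t => φ' t - φ' 0 - c * t)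
      (convex_Icc 0 1) (fun t ht => (hψ t ht).continuousAt.continuousWithinAt)
      (fun t ht => ?_) (fun t ht => ?_)
    · exact (hψ t (interior_subset ht)).hasDerivWithinAt
    · rw [interior_Icc] at ht
      linarith [hgrowth t ht]
  have hψ01 := hmono (Set.left_mem_Icc.2 zero_le_one) (Set.right_mem_Icc.2 zero_le_one) zero_le_one
  simp only [ψ] at hψ01
  linarith

section

variable {E : Type*} [NormedAddCommGroup E] [InnerProductSpace ℝ E] [CompleteSpace E]
  {f : E → ℝ} {μ : ℝ}

lemma hasDerivAt_comp_add_smul {u d : E} {t : ℝ} (hf : DifferentiableAt ℝ f (u + t • d)) :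
    HasDerivAt (fun s : ℝ => f (u + s • d)) ⟪gradient f (u + t • d), d⟫ t := by
  have hline : HasDerivAt (fun s : ℝ => u + s • d) d t := by
    simpa using ((hasDerivAt_id t).smul_const d).const_add u
  simpa [Function.comp_def] using hf.hasGradientAt.hasFDerivAt.comp_hasDerivAt t hline

lemma add_inner_gradient_add_le_of_strongMono (hf : Differentiable ℝ f)
    (hsc : ∀ u v : E, μ * ‖u - v‖ ^ 2 ≤ ⟪gradient f u - gradient f v, u - v⟫) (u v : E) :
    f u + ⟪gradient f u, v - u⟫ + μ / 2 * ‖v - u‖ ^ 2 ≤ f v := by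
  have hsegment := add_deriv_zero_add_half_le_of_sub_deriv_ge (c := μ * ‖v - u‖ ^ 2)
    (φ := fun s : ℝ => f (u + s • (v - u)))
    (φ' := fun s => ⟪gradient f (u + s • (v - u)), v - u⟫)
    (fun t _ => hasDerivAt_comp_add_smul (hf _)) (fun t ht => ?_)
  · simp only [zero_smul, add_zero, one_smul, add_sub_cancel] at hsegment
    linarith
  · have hmono := hsc (u + t • (v - u)) u
    rw [add_sub_cancel_left, norm_smul, mul_pow, Real.norm_eq_abs, sq_abs, inner_smul_right,
      inner_sub_left] at hmono
    simp only [zero_smul, add_zero]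
    nlinarith [ht.1]

omit [CompleteSpace E] in
lemma neg_sq_norm_div_le_inner_add_half_mul_sq_norm (hμ : 0 < μ) (x d : E) :
    -(‖x‖ ^ 2 / (2 * μ)) ≤ ⟪x, d⟫ + μ / 2 * ‖d‖ ^ 2 := by
  have hsq : 0 ≤ ‖x + μ • d‖ ^ 2 := sq_nonneg _
  rw [norm_add_sq_real, inner_smul_right, norm_smul, mul_pow, Real.norm_eq_abs, sq_abs] at hsq
  have hexpand : ⟪x, d⟫ + μ / 2 * ‖d‖ ^ 2 + ‖x‖ ^ 2 / (2 * μ)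
      = (‖x‖ ^ 2 + 2 * (μ * ⟪x, d⟫) + μ ^ 2 * ‖d‖ ^ 2) / (2 * μ) := by
    field_simp
    ring
  rw [neg_le_iff_add_nonneg, hexpand]
  positivity

lemma sub_le_sq_norm_gradient_div_of_strongMono (hμ : 0 < μ) (hf : Differentiable ℝ f)
    (hsc : ∀ u v : E, μ * ‖u - v‖ ^ 2 ≤ ⟪gradient f u - gradient f v, u - v⟫) (u v : E) :
    f u - f v ≤ ‖gradient f u‖ ^ 2 / (2 * μ) := by
  linarith [add_inner_gradient_add_le_of_strongMono hf hsc u v,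
    neg_sq_norm_div_le_inner_add_half_mul_sq_norm hμ (gradient f u) (v - u)]

end

theorem approx_gd_objective_bound_general {m : ℕ}
    (f g : EuclideanSpace ℝ (Fin m) → ℝ) (μ α ζ ρ : ℝ)
    (wstar wtilde wT : EuclideanSpace ℝ (Fin m))
    (hμ : 0 < μ)
    (hfdiff : Differentiable ℝ f)
    (hsc : ∀ u v : EuclideanSpace ℝ (Fin m),
      μ * ‖u - v‖ ^ 2 ≤ ⟪gradient f u - gradient f v, u - v⟫)
    (hobj : ∀ w : EuclideanSpace ℝ (Fin m), |f w - g w| ≤ α)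
    (hgrad : ∀ w : EuclideanSpace ℝ (Fin m), ‖gradient f w - gradient g w‖ ≤ ζ)
    (hgT : g wT ≤ g wtilde)
    (hρbound : ‖gradient g wtilde‖ ≤ ρ) :
    f wT - f wstar ≤ 2 * α + (ρ ^ 2 + 2 * ζ * ρ + ζ ^ 2) / (2 * μ) := by
  have hgradf : ‖gradient f wtilde‖ ≤ ρ + ζ :=
    (norm_le_norm_add_norm_sub' _ _).trans (add_le_add hρbound (hgrad wtilde))
  have hT := (abs_le.1 (hobj wT)).2
  have htilde := (abs_le.1 (hobj wtilde)).1
  calc f wT - f wstar ≤ 2 * α + (f wtilde - f wstar) := by linarith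
    _ ≤ 2 * α + ‖gradient f wtilde‖ ^ 2 / (2 * μ) := by
      gcongr
      exact sub_le_sq_norm_gradient_div_of_strongMono hμ hfdiff hsc wtilde wstar
    _ ≤ 2 * α + (ρ ^ 2 + 2 * ζ * ρ + ζ ^ 2) / (2 * μ) := by
      gcongr
      nlinarith [norm_nonneg (gradient f wtilde)]

/-- Convergence of approximate gradient descent (objective value bound):
if `f` is `μ`-strongly convex with minimizer `wstar`, `|f - g| ≤ α` and `‖∇f - ∇g‖ ≤ ζ`
pointwise, `g w_T ≤ g w̃` and `‖∇g w̃‖ ≤ ρ`, then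
`f w_T - f wstar ≤ 2α + (ρ² + 2ζρ + ζ²)/(2μ)`. -/
theorem approx_gd_objective_bound {m : ℕ}
    (f g : EuclideanSpace ℝ (Fin m) → ℝ) (μ α ζ ρ : ℝ)
    (wstar wtilde wT : EuclideanSpace ℝ (Fin m))
    (hμ : 0 < μ) (hα : 0 ≤ α) (hζ : 0 ≤ ζ) (hρ : 0 ≤ ρ)
    (hfdiff : Differentiable ℝ f) (hgdiff : Differentiable ℝ g)
    (hsc : ∀ u v : EuclideanSpace ℝ (Fin m),
      μ * ‖u - v‖ ^ 2 ≤ ⟪gradient f u - gradient f v, u - v⟫)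
    (hmin : ∀ v : EuclideanSpace ℝ (Fin m), f wstar ≤ f v)
    (hobj : ∀ w : EuclideanSpace ℝ (Fin m), |f w - g w| ≤ α)
    (hgrad : ∀ w : EuclideanSpace ℝ (Fin m), ‖gradient f w - gradient g w‖ ≤ ζ)
    (hgT : g wT ≤ g wtilde)
    (hρbound : ‖gradient g wtilde‖ ≤ ρ) :
    f wT - f wstar ≤ 2 * α + (ρ ^ 2 + 2 * ζ * ρ + ζ ^ 2) / (2 * μ) :=
  approx_gd_objective_bound_general f g μ α ζ ρ wstar wtilde wT hμ hfdiff hsc hobj hgrad hgT hρbound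
end

section
/- If the objective f has strong convexity parameter μ_f and F : ℝ → ℝ is a nonincreasing nonnegative function on [Θ − R², Θ] with F(Θ) ≥ 1/Θ, then the barrier-augmented objective f⁺(w) = f(w) − λ·B(Θ − ‖w‖²), where B' = F and λ > 0, is (μ_f + 2λ/Θ)-strongly convex on {w : ‖w‖ ≤ R}, where R² < Θ. -/
open scoped RealInnerProductSpace

/-!
The gradient of `w ↦ -λ B(Θ - ‖w‖²)` is the radial field `2λ F(Θ - ‖w‖²) w`. Its weight is at
least `F Θ ≥ 1/Θ` and does not decrease as `‖w‖²` grows, and such a radial field is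
`(2λ/Θ)`-strongly monotone; adding it to the `μf`-strongly monotone gradient of `f` gives the claim.
-/

theorem hasGradientAt_sub_mul_comp_sub_norm_sq {E : Type*} [NormedAddCommGroup E]
    [InnerProductSpace ℝ E] [CompleteSpace E] {f : E → ℝ} {B : ℝ → ℝ} {f' w : E}
    {b lam Θ : ℝ} (hf : HasGradientAt f f' w) (hB : HasDerivAt B b (Θ - ‖w‖ ^ 2)) :
    HasGradientAt (fun z => f z - lam * B (Θ - ‖z‖ ^ 2)) (f' + (2 * lam * b) • w) w := by
  have hnorm := ((hasFDerivAt_id w).norm_sq).const_sub Θ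
  rw [hasGradientAt_iff_hasFDerivAt]
  refine (hf.hasFDerivAt.sub ((hB.comp_hasFDerivAt w hnorm).const_mul lam)).congr_fderiv ?_
  ext x
  simp only [id_eq, ContinuousLinearMap.comp_id, smul_neg, sub_neg_eq_add,
    add_apply, InnerProductSpace.toDual_apply_apply,
    smul_apply, coe_innerSL_apply, nsmul_eq_mul, Nat.cast_ofNat, smul_eq_mul,
    map_add, map_smul, add_right_inj]
  ring

theorem real_inner_smul_sub_smul_ge {E : Type*} [NormedAddCommGroup E]
    [InnerProductSpace ℝ E] {u v : E} {α β c : ℝ} (hα : c ≤ α) (hβ : c ≤ β)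
    (hmono : 0 ≤ (α - β) * (‖u‖ ^ 2 - ‖v‖ ^ 2)) :
    c * ‖u - v‖ ^ 2 ≤ ⟪α • u - β • v, u - v⟫ := by
  -- both summands on the right are nonnegative
  have key : 2 * (⟪α • u - β • v, u - v⟫ - c * ‖u - v‖ ^ 2) =
      (α - c + (β - c)) * ‖u - v‖ ^ 2 + (α - β) * (‖u‖ ^ 2 - ‖v‖ ^ 2) := by
    simp only [inner_sub_left, inner_sub_right, real_inner_smul_left, real_inner_self_eq_norm_sq,
      real_inner_comm u v, norm_sub_sq_real]
    ring
  nlinarith [sq_nonneg ‖u - v‖]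

theorem AntitoneOn.mul_sub_nonneg_of_const_sub {F : ℝ → ℝ} {s : Set ℝ} {Θ x y : ℝ}
    (hF : AntitoneOn F s) (hx : Θ - x ∈ s) (hy : Θ - y ∈ s) :
    0 ≤ (F (Θ - x) - F (Θ - y)) * (x - y) := by
  rcases le_total x y with hxy | hxy
  · exact mul_nonneg_of_nonpos_of_nonpos (sub_nonpos.2 (hF hy hx (by linarith)))
      (sub_nonpos.2 hxy)
  · exact mul_nonneg (sub_nonneg.2 (hF hx hy (by linarith))) (sub_nonneg.2 hxy)

theorem barrier_augmented_strong_convexity_general {m : ℕ}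
    (f : EuclideanSpace ℝ (Fin m) → ℝ)
    (B F : ℝ → ℝ)
    (μf lam Θ R : ℝ)
    (hlam : 0 < lam)
    (hdiff : Differentiable ℝ f)
    (hsc : ∀ u v : EuclideanSpace ℝ (Fin m),
      μf * ‖u - v‖ ^ 2 ≤ ⟪gradient f u - gradient f v, u - v⟫)
    (hBF : ∀ x ∈ Set.Icc (Θ - R ^ 2) Θ, HasDerivAt B (F x) x)
    (hFanti : AntitoneOn F (Set.Icc (Θ - R ^ 2) Θ))
    (hFΘ : 1 / Θ ≤ F Θ) :
    ∀ u v : EuclideanSpace ℝ (Fin m), ‖u‖ ≤ R → ‖v‖ ≤ R →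
      (μf + 2 * lam / Θ) * ‖u - v‖ ^ 2 ≤
        ⟪gradient (fun z => f z - lam * B (Θ - ‖z‖ ^ 2)) u -
          gradient (fun z => f z - lam * B (Θ - ‖z‖ ^ 2)) v, u - v⟫ := by
  intro u v hu hv
  have hmem : ∀ w : EuclideanSpace ℝ (Fin m), ‖w‖ ≤ R → Θ - ‖w‖ ^ 2 ∈ Set.Icc (Θ - R ^ 2) Θ :=
    fun w hw => ⟨sub_le_sub_left (pow_le_pow_left₀ (norm_nonneg w) hw 2) Θ,
      by linarith [sq_nonneg ‖w‖]⟩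
  have hgrad : ∀ w : EuclideanSpace ℝ (Fin m), ‖w‖ ≤ R →
      gradient (fun z => f z - lam * B (Θ - ‖z‖ ^ 2)) w
        = gradient f w + (2 * lam) • F (Θ - ‖w‖ ^ 2) • w := fun w hw => by
    rw [← mul_smul]
    exact (hasGradientAt_sub_mul_comp_sub_norm_sq (hdiff w).hasGradientAt
      (hBF _ (hmem w hw))).gradient
  have hΘmem : Θ ∈ Set.Icc (Θ - R ^ 2) Θ := by
    simpa using hmem 0 (by simpa using (norm_nonneg u).trans hu)
  have hFge : ∀ w : EuclideanSpace ℝ (Fin m), ‖w‖ ≤ R → 1 / Θ ≤ F (Θ - ‖w‖ ^ 2) :=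
    fun w hw => hFΘ.trans (hFanti (hmem w hw) hΘmem (by linarith [sq_nonneg ‖w‖]))
  have hbarrier := real_inner_smul_sub_smul_ge (hFge u hu) (hFge v hv)
    (hFanti.mul_sub_nonneg_of_const_sub (hmem u hu) (hmem v hv))
  rw [hgrad u hu, hgrad v hv, add_sub_add_comm, ← smul_sub, inner_add_left, real_inner_smul_left]
  calc (μf + 2 * lam / Θ) * ‖u - v‖ ^ 2
      = μf * ‖u - v‖ ^ 2 + 2 * lam * (1 / Θ * ‖u - v‖ ^ 2) := by ring
    _ ≤ _ := add_le_add (hsc u v) (mul_le_mul_of_nonneg_left hbarrier (by linarith))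

/-- Strong convexity of the barrier-augmented objective: if `f` is `μf`-strongly convex and
`F : ℝ → ℝ` is nonincreasing and nonnegative on `[Θ - R², Θ]` with `F Θ ≥ 1/Θ`, then the
barrier-augmented objective `f⁺(w) = f(w) - λ B(Θ - ‖w‖²)`, where `B' = F` and `λ > 0`, is
`(μf + 2λ/Θ)`-strongly convex on `{w : ‖w‖ ≤ R}`, where `R² < Θ`. -/
theorem barrier_augmented_strong_convexity {m : ℕ}
    (f : EuclideanSpace ℝ (Fin m) → ℝ)
    (B F : ℝ → ℝ)
    (μf lam Θ R : ℝ)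
    (hμf : 0 < μf) (hlam : 0 < lam) (hΘ : 0 < Θ) (hR : 0 < R) (hRΘ : R ^ 2 < Θ)
    (hdiff : Differentiable ℝ f)
    (hsc : ∀ u v : EuclideanSpace ℝ (Fin m),
      μf * ‖u - v‖ ^ 2 ≤ ⟪gradient f u - gradient f v, u - v⟫)
    (hBF : ∀ x ∈ Set.Icc (Θ - R ^ 2) Θ, HasDerivAt B (F x) x)
    (hFanti : AntitoneOn F (Set.Icc (Θ - R ^ 2) Θ))
    (hFnonneg : ∀ x ∈ Set.Icc (Θ - R ^ 2) Θ, 0 ≤ F x)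
    (hFΘ : 1 / Θ ≤ F Θ) :
    ∀ u v : EuclideanSpace ℝ (Fin m), ‖u‖ ≤ R → ‖v‖ ≤ R →
      (μf + 2 * lam / Θ) * ‖u - v‖ ^ 2 ≤
        ⟪gradient (fun z => f z - lam * B (Θ - ‖z‖ ^ 2)) u -
          gradient (fun z => f z - lam * B (Θ - ‖z‖ ^ 2)) v, u - v⟫ :=
  barrier_augmented_strong_convexity_general f B F μf lam Θ R hlam hdiff hsc hBF hFanti hFΘ
end
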